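/- arXiv:2505.10458 — 3 statements merged into one kernel-verified Lean document; each statement's English description precedes it below -/
import Mathlib

section
/- Let (X,T) be a topological dynamical system, E ⊂ X analytic, μ a Borel probability measure on X, and s ≥ 0. (a) If the local upper entropy satisfies h̄_μ(T,x) ≤ s for all x ∈ E, then the packing topological entropy h^P_top(T,E) ≤ s. (b) If μ(E) > 0 and h̄_μ(T,x) ≥ s for all x ∈ E, then h^P_top(T,E) ≥ s. -/
open Filter Set MeasureTheory Topology
open scoped ENNReal NNReal

section DynDefs
variable {X : Type*} [MetricSpace X]

/-- The open Bowen ball of order `n` and radius `ε` centered at `x`. -/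
def bowenBall (T : X → X) (n : ℕ) (x : X) (ε : ℝ) : Set X :=
  {y | ∀ k < n, dist (T^[k] x) (T^[k] y) < ε}

/-- The closed Bowen ball of order `n` and radius `ε` centered at `x`. -/
def closedBowenBall (T : X → X) (n : ℕ) (x : X) (ε : ℝ) : Set X :=
  {y | ∀ k < n, dist (T^[k] x) (T^[k] y) ≤ ε}

/-- A gauge (dimension) function on `ℕ`: positive, antitone, tending to `0`. -/
def GaugeSeq (b : ℕ → ℝ) : Prop :=
  (∀ n, 0 < b n) ∧ Antitone b ∧ Tendsto b atTop (nhds 0)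

/-- `M^b_{N,ε}(Z)`: infimum of `∑ b(n_i)` over countable covers of `Z` by Bowen
balls of radius `ε` and orders `≥ N`. -/
noncomputable def bowenM (T : X → X) (b : ℕ → ℝ) (N : ℕ) (ε : ℝ) (Z : Set X) : ℝ≥0∞ :=
  sInf { r : ℝ≥0∞ | ∃ (x : ℕ → X) (n : ℕ → ℕ), (∀ i, N ≤ n i) ∧
      Z ⊆ ⋃ i, bowenBall T (n i) (x i) ε ∧ r = ∑' i, ENNReal.ofReal (b (n i)) }

/-- `M^b_ε(Z) = lim_{N → ∞} M^b_{N,ε}(Z) = sup_N M^b_{N,ε}(Z)`. -/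
noncomputable def bowenMe (T : X → X) (b : ℕ → ℝ) (ε : ℝ) (Z : Set X) : ℝ≥0∞ :=
  ⨆ N : ℕ, bowenM T b N ε Z

/-- `M^b(Z) = lim_{ε → 0} M^b_ε(Z) = sup_{ε > 0} M^b_ε(Z)`. -/
noncomputable def bowenMFull (T : X → X) (b : ℕ → ℝ) (Z : Set X) : ℝ≥0∞ :=
  ⨆ ε : {ε : ℝ // 0 < ε}, bowenMe T b ε.1 Z

/-- Bowen topological entropy of `Z` at scale `ε`: the critical exponent where
`M^s_ε(Z)` jumps from `∞` to `0`. -/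
noncomputable def bowenEntropyE (T : X → X) (ε : ℝ) (Z : Set X) : ℝ≥0∞ :=
  ⨆ s : {s : ℝ≥0 // bowenMe T (fun n => Real.exp (-(s : ℝ) * (n : ℝ))) ε Z = ⊤}, (s.1 : ℝ≥0∞)

/-- Bowen topological entropy of a subset `Z`. -/
noncomputable def bowenEntropy (T : X → X) (Z : Set X) : ℝ≥0∞ :=
  ⨆ ε : {ε : ℝ // 0 < ε}, bowenEntropyE T ε.1 Z

/-- `P^s_{N,ε}(Z)`: supremum of `∑ e^{-s n_i}` over countable pairwise disjoint
families of closed Bowen balls with centers in `Z` and orders `≥ N`. -/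
noncomputable def packP (T : X → X) (s : ℝ) (N : ℕ) (ε : ℝ) (Z : Set X) : ℝ≥0∞ :=
  sSup { r : ℝ≥0∞ | ∃ (J : Set ℕ) (x : ℕ → X) (n : ℕ → ℕ),
      (∀ i ∈ J, x i ∈ Z ∧ N ≤ n i) ∧
      (J.PairwiseDisjoint fun i => closedBowenBall T (n i) (x i) ε) ∧
      r = ∑' i : J, ENNReal.ofReal (Real.exp (-s * ((n i.1 : ℕ) : ℝ))) }

/-- `P^s_ε(Z) = lim_{N → ∞} P^s_{N,ε}(Z) = inf_N P^s_{N,ε}(Z)`. -/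
noncomputable def packPe (T : X → X) (s : ℝ) (ε : ℝ) (Z : Set X) : ℝ≥0∞ :=
  ⨅ N : ℕ, packP T s N ε Z

/-- `𝒫^s_ε(Z)`: the packing pre-measure, infimum of `∑_i P^s_ε(Z_i)` over
countable covers `{Z_i}` of `Z`. -/
noncomputable def packMeasE (T : X → X) (s : ℝ) (ε : ℝ) (Z : Set X) : ℝ≥0∞ :=
  ⨅ (Zi : ℕ → Set X) (_ : Z ⊆ ⋃ i, Zi i), ∑' i, packPe T s ε (Zi i)

/-- Packing topological entropy of `Z` at scale `ε`: the critical exponent where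
`𝒫^s_ε(Z)` jumps from `∞` to `0`. -/
noncomputable def packEntropyE (T : X → X) (ε : ℝ) (Z : Set X) : ℝ≥0∞ :=
  ⨆ s : {s : ℝ≥0 // packMeasE T (s : ℝ) ε Z = ⊤}, (s.1 : ℝ≥0∞)

/-- Packing topological entropy of a subset `Z`. -/
noncomputable def packEntropy (T : X → X) (Z : Set X) : ℝ≥0∞ :=
  ⨆ ε : {ε : ℝ // 0 < ε}, packEntropyE T ε.1 Z

/-- `-(1/n) log a`, valued in `ℝ≥0∞`, with the convention `log 0 = -∞`. -/
noncomputable def negLogDiv (a : ℝ≥0∞) (n : ℕ) : ℝ≥0∞ :=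
  if a = 0 then ⊤ else ENNReal.ofReal (-(Real.log a.toReal) / (n : ℝ))

/-- Minimal cardinality of a finite `(n,ε)`-spanning set of `Z`. -/
noncomputable def spanCard (T : X → X) (n : ℕ) (ε : ℝ) (Z : Set X) : ℝ≥0∞ :=
  ⨅ (E : Finset X) (_ : ∀ z ∈ Z, ∃ y ∈ E, ∀ k < n, dist (T^[k] z) (T^[k] y) ≤ ε),
    (E.card : ℝ≥0∞)

/-- Topological entropy of a subset `Z` defined via spanning sets. -/
noncomputable def htopSet (T : X → X) (Z : Set X) : ℝ≥0∞ :=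
  ⨆ ε : {ε : ℝ // 0 < ε},
    Filter.limsup (fun n => ENNReal.ofReal (Real.log (spanCard T n ε.1 Z).toReal / (n : ℝ))) atTop

/-- `W^b_{N,ε}(Z)`: the weighted Bowen-ball covering quantity, infimum of
`∑ c_i b(n_i)` over weighted families with `∑ c_i χ_{B_{n_i}(x_i,ε)} ≥ χ_Z`. -/
noncomputable def weightedW (T : X → X) (b : ℕ → ℝ) (N : ℕ) (ε : ℝ) (Z : Set X) : ℝ≥0∞ :=
  sInf { r : ℝ≥0∞ | ∃ (x : ℕ → X) (n : ℕ → ℕ) (c : ℕ → ℝ),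
      (∀ i, 0 < c i) ∧ (∀ i, N ≤ n i) ∧
      (∀ z ∈ Z, (1 : ℝ≥0∞) ≤
        ∑' i, Set.indicator (bowenBall T (n i) (x i) ε) (fun _ => ENNReal.ofReal (c i)) z) ∧
      r = ∑' i, ENNReal.ofReal (c i) * ENNReal.ofReal (b (n i)) }

/-- `W^b(Z)`: double limit of `W^b_{N,ε}(Z)` as `N → ∞` and `ε → 0`. -/
noncomputable def weightedWFull (T : X → X) (b : ℕ → ℝ) (Z : Set X) : ℝ≥0∞ :=
  ⨆ ε : {ε : ℝ // 0 < ε}, ⨆ N : ℕ, weightedW T b N ε Z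

end DynDefs

section MeasDefs
variable {X : Type*} [MetricSpace X] [MeasurableSpace X]

/-- Local upper entropy of `μ` at `x` for radius `ε`. -/
noncomputable def upperLocalEntropyE (T : X → X) (μ : Measure X) (x : X) (ε : ℝ) : ℝ≥0∞ :=
  Filter.limsup (fun n => negLogDiv (μ (bowenBall T n x ε)) n) atTop

/-- Local lower entropy of `μ` at `x` for radius `ε`. -/
noncomputable def lowerLocalEntropyE (T : X → X) (μ : Measure X) (x : X) (ε : ℝ) : ℝ≥0∞ :=
  Filter.liminf (fun n => negLogDiv (μ (bowenBall T n x ε)) n) atTop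

/-- Local upper entropy `h̄_μ(T,x) = lim_{ε → 0} limsup_n -(1/n) log μ(B_n(x,ε))`. -/
noncomputable def upperLocalEntropy (T : X → X) (μ : Measure X) (x : X) : ℝ≥0∞ :=
  ⨆ ε : {ε : ℝ // 0 < ε}, upperLocalEntropyE T μ x ε.1

/-- Local lower entropy `h̲_μ(T,x) = lim_{ε → 0} liminf_n -(1/n) log μ(B_n(x,ε))`. -/
noncomputable def lowerLocalEntropy (T : X → X) (μ : Measure X) (x : X) : ℝ≥0∞ :=
  ⨆ ε : {ε : ℝ // 0 < ε}, lowerLocalEntropyE T μ x ε.1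

/-- Measure-theoretical upper entropy `h̄_μ(T) = ∫ h̄_μ(T,x) dμ`. -/
noncomputable def upperEntropy (T : X → X) (μ : Measure X) : ℝ≥0∞ :=
  ∫⁻ x, upperLocalEntropy T μ x ∂μ

/-- Measure-theoretical lower entropy `h̲_μ(T) = ∫ h̲_μ(T,x) dμ`. -/
noncomputable def lowerEntropy (T : X → X) (μ : Measure X) : ℝ≥0∞ :=
  ∫⁻ x, lowerLocalEntropy T μ x ∂μ

end MeasDefs

/-! Part (a) is a mass distribution argument. If `e^{-tn} ≤ μ(B_n(x,ε))` for all `n ≥ N` and all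
`x ∈ Z`, then for every disjoint family of closed Bowen balls centred in `Z` with orders `n_i ≥ N`
we get `∑ e^{-t' n_i} ≤ e^{-(t'-t)N} ∑ μ(B̄_{n_i}(x_i,ε)) ≤ e^{-(t'-t)N} μ(X)`. If the local
entropy at scale `ε` is `< t` on `E`, then `E` is a countable union of such sets `Z` (one for each
`N`), so `𝒫^{t'}_ε(E) < ∞` for every `t' > t`.

For part (b), if the local entropy at scale `ε` exceeds `t` on a set `F` of positive measure, then
every `x ∈ F` has arbitrarily large orders `n` with `μ(B_n(x,ε)) ≤ e^{-tn}`. A Vitali-type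
selection among the closed balls `B̄_n(x,ε/4)` gives a countable disjoint family whose open
enlargements `B_n(x,ε)` cover `F`, so `∑ e^{-t' n_i} ≥ e^{(t-t')N} μ(F)` for every `N`. Since any
countable cover of `E` has a piece meeting `F` in positive measure, `𝒫^{t'}_{ε/4}(E) = ∞`. -/

section BowenBall
variable {X : Type*} [MetricSpace X] {T : X → X} {n : ℕ} {x : X} {ε : ℝ}

lemma mem_bowenBall_self (hε : 0 < ε) : x ∈ bowenBall T n x ε :=
  fun _ _ => by simpa using hε

lemma mem_closedBowenBall_self (hε : 0 ≤ ε) : x ∈ closedBowenBall T n x ε :=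
  fun _ _ => by simpa using hε

lemma bowenBall_subset_closedBowenBall : bowenBall T n x ε ⊆ closedBowenBall T n x ε :=
  fun _ hy k hk => (hy k hk).le

lemma bowenBall_mono {ε' : ℝ} (h : ε ≤ ε') : bowenBall T n x ε ⊆ bowenBall T n x ε' :=
  fun _ hy k hk => (hy k hk).trans_le h

lemma isOpen_bowenBall (hT : Continuous T) : IsOpen (bowenBall T n x ε) := by
  have h : bowenBall T n x ε = ⋂ k ∈ Finset.range n, T^[k] ⁻¹' Metric.ball (T^[k] x) ε := by
    ext y
    simp [bowenBall, dist_comm]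
  rw [h]
  exact isOpen_biInter_finset fun k _ => Metric.isOpen_ball.preimage (hT.iterate k)

lemma isClosed_closedBowenBall (hT : Continuous T) : IsClosed (closedBowenBall T n x ε) := by
  have h : closedBowenBall T n x ε =
      ⋂ k ∈ Finset.range n, T^[k] ⁻¹' Metric.closedBall (T^[k] x) ε := by
    ext y
    simp [closedBowenBall, dist_comm]
  rw [h]
  exact isClosed_biInter fun k _ => Metric.isClosed_closedBall.preimage (hT.iterate k)

lemma closedBowenBall_subset_bowenBall_of_inter_nonempty {n₁ n₂ : ℕ} {y : X} (hε : 0 < ε)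
    (hn : n₁ ≤ n₂) (h : (closedBowenBall T n₂ y ε ∩ closedBowenBall T n₁ x ε).Nonempty) :
    closedBowenBall T n₂ y ε ⊆ bowenBall T n₁ x (4 * ε) := by
  obtain ⟨w, hwy, hwx⟩ := h
  intro z hz k hk
  have hxw := hwx k hk
  have hyw := hwy k (hk.trans_le hn)
  have hyz := hz k (hk.trans_le hn)
  calc dist (T^[k] x) (T^[k] z)
      ≤ dist (T^[k] x) (T^[k] w) + dist (T^[k] w) (T^[k] y) + dist (T^[k] y) (T^[k] z) :=
        dist_triangle4 _ _ _ _
    _ < 4 * ε := by rw [dist_comm (T^[k] w)]; linarith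

lemma exists_pairwiseDisjoint_closedBowenBall_cover (S : Set X) (hε : 0 < ε) (n : X → ℕ) :
    ∃ I ⊆ S, I.PairwiseDisjoint (fun x => closedBowenBall T (n x) x ε) ∧
      S ⊆ ⋃ x ∈ I, bowenBall T (n x) x (4 * ε) := by
  -- With size `2⁻¹ ^ n x` and `τ = 3 / 2`, Vitali's selection charges every ball to a selected
  -- ball it meets whose order is not larger.
  obtain ⟨I, hIS, hdisj, hcov⟩ := Vitali.exists_disjoint_subfamily_covering_enlargement
    (fun x => closedBowenBall T (n x) x ε) S (fun x => (2⁻¹ : ℝ) ^ n x) (3 / 2) (by norm_num)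
    (fun _ _ => by positivity) 1 (fun _ _ => pow_le_one₀ (by norm_num) (by norm_num))
    (fun x _ => ⟨x, mem_closedBowenBall_self hε.le⟩)
  refine ⟨I, hIS, hdisj, fun y hy => ?_⟩
  obtain ⟨x, hxI, hmeet, hsize⟩ := hcov y hy
  have hn : n x ≤ n y := by
    by_contra! hlt
    have hpow : (2⁻¹ : ℝ) ^ n x ≤ 2⁻¹ * 2⁻¹ ^ n y := by
      rw [← pow_succ']
      exact pow_le_pow_of_le_one (by norm_num) (by norm_num) hlt
    have hpos : (0 : ℝ) < 2⁻¹ ^ n y := by positivity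
    linarith
  exact mem_biUnion hxI (closedBowenBall_subset_bowenBall_of_inter_nonempty hε hn hmeet
    (mem_closedBowenBall_self hε.le))

lemma countable_of_pairwiseDisjoint_closedBowenBall [TopologicalSpace.SeparableSpace X]
    (hT : Continuous T) (hε : 0 < ε) {I : Set X} {n : X → ℕ}
    (h : I.PairwiseDisjoint fun x => closedBowenBall T (n x) x ε) : I.Countable :=
  h.countable_of_nonempty_interior fun x _ => ⟨x, interior_maximal
    bowenBall_subset_closedBowenBall (isOpen_bowenBall hT) (mem_bowenBall_self hε)⟩

end BowenBall

section Packing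
variable {X : Type*} [MetricSpace X] {T : X → X} {ε : ℝ} {Z : Set X}

lemma tsum_le_packP {s : ℝ} {N : ℕ} {I : Set X} {n : X → ℕ} (hI : I.Countable) (hIZ : I ⊆ Z)
    (hn : ∀ x ∈ I, N ≤ n x) (hdisj : I.PairwiseDisjoint fun x => closedBowenBall T (n x) x ε) :
    ∑' x : I, ENNReal.ofReal (Real.exp (-s * n x)) ≤ packP T s N ε Z := by
  rcases I.eq_empty_or_nonempty with rfl | ⟨x₀, -⟩
  · simp
  have : Nonempty X := ⟨x₀⟩
  obtain ⟨f, hf⟩ := countable_iff_exists_injOn.1 hI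
  set y := Function.invFunOn f I
  have hy : ∀ m ∈ f '' I, y m ∈ I := fun m hm => Function.invFunOn_mem hm
  have hyf : ∀ x ∈ I, y (f x) = x := fun x hx => hf.leftInvOn_invFunOn hx
  have hy_disj : (f '' I).PairwiseDisjoint fun m => closedBowenBall T (n (y m)) (y m) ε :=
    fun m₁ h₁ m₂ h₂ hne => hdisj (hy m₁ h₁) (hy m₂ h₂) fun h =>
      hne (by rw [← Function.invFunOn_eq h₁, ← Function.invFunOn_eq h₂]; exact congrArg f h)
  refine le_trans ?_ (le_sSup ⟨f '' I, y, n ∘ y,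
    fun m hm => ⟨hIZ (hy m hm), hn _ (hy m hm)⟩, hy_disj, rfl⟩)
  have hinj : Function.Injective fun x : I => (⟨f x, mem_image_of_mem f x.2⟩ : f '' I) :=
    fun a b hab => Subtype.ext (hf a.2 b.2 (congrArg Subtype.val hab))
  refine le_of_eq_of_le (tsum_congr fun x => ?_) (ENNReal.tsum_comp_le_tsum_of_injective hinj _)
  simp only [Function.comp_apply, hyf x x.2]

lemma packEntropyE_le {r : ℝ≥0∞} (h : ∀ s : ℝ≥0, r < s → packMeasE T s ε Z ≠ ⊤) :
    packEntropyE T ε Z ≤ r :=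
  iSup_le fun s => not_lt.1 fun hlt => h s.1 hlt s.2

lemma le_packEntropyE {s : ℝ≥0} (h : packMeasE T s ε Z = ⊤) : (s : ℝ≥0∞) ≤ packEntropyE T ε Z :=
  le_iSup (fun s : {s : ℝ≥0 // packMeasE T s ε Z = ⊤} => (s.1 : ℝ≥0∞)) ⟨s, h⟩

lemma packEntropyE_le_packEntropy (hε : 0 < ε) : packEntropyE T ε Z ≤ packEntropy T Z :=
  le_iSup (fun ε : {ε : ℝ // 0 < ε} => packEntropyE T ε.1 Z) ⟨ε, hε⟩

end Packing

lemma negLogDiv_anti {a b : ℝ≥0∞} (hab : a ≤ b) (hb : b ≠ ⊤) (n : ℕ) :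
    negLogDiv b n ≤ negLogDiv a n := by
  rcases eq_or_ne a 0 with rfl | ha
  · simp [negLogDiv]
  have hb0 : b ≠ 0 := (pos_of_ne_zero ha |>.trans_le hab).ne'
  have hapos : 0 < a.toReal := ENNReal.toReal_pos ha (ne_top_of_le_ne_top hb hab)
  rw [negLogDiv, negLogDiv, if_neg hb0, if_neg ha]
  gcongr

lemma negLogDiv_lt_ofReal_iff {a : ℝ≥0∞} {n : ℕ} {t : ℝ} (ha : a ≠ ⊤) (hn : 0 < n) (ht : 0 < t) :
    negLogDiv a n < ENNReal.ofReal t ↔ ENNReal.ofReal (Real.exp (-t * n)) < a := by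
  rcases eq_or_ne a 0 with rfl | ha0
  · simp [negLogDiv]
  have hapos : 0 < a.toReal := ENNReal.toReal_pos ha0 ha
  have hn' : (0 : ℝ) < n := by exact_mod_cast hn
  rw [negLogDiv, if_neg ha0, ENNReal.ofReal_lt_ofReal_iff ht,
    ENNReal.ofReal_lt_iff_lt_toReal (Real.exp_pos _).le ha, ← Real.lt_log_iff_exp_lt hapos,
    div_lt_iff₀ hn']
  constructor <;> intro h <;> linarith

section LocalEntropy
variable {X : Type*} [MetricSpace X] [MeasurableSpace X] {T : X → X} {μ : Measure X}
  {x : X} {ε t : ℝ}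

lemma upperLocalEntropyE_le_upperLocalEntropy (hε : 0 < ε) :
    upperLocalEntropyE T μ x ε ≤ upperLocalEntropy T μ x :=
  le_iSup (fun ε : {ε : ℝ // 0 < ε} => upperLocalEntropyE T μ x ε.1) ⟨ε, hε⟩

variable [IsFiniteMeasure μ]

lemma antitone_upperLocalEntropyE : Antitone (upperLocalEntropyE T μ x) := fun _ _ h =>
  limsup_le_limsup (.of_forall fun n =>
    negLogDiv_anti (measure_mono (bowenBall_mono h)) (measure_ne_top μ _) n)

lemma eventually_exp_le_measure_bowenBall (ht : 0 < t)
    (h : upperLocalEntropyE T μ x ε < ENNReal.ofReal t) :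
    ∀ᶠ n : ℕ in atTop, ENNReal.ofReal (Real.exp (-t * n)) ≤ μ (bowenBall T n x ε) := by
  filter_upwards [eventually_lt_of_limsup_lt h, eventually_gt_atTop 0] with n hn hn0
  exact ((negLogDiv_lt_ofReal_iff (measure_ne_top μ _) hn0 ht).1 hn).le

lemma frequently_measure_bowenBall_le (ht : 0 < t)
    (h : ENNReal.ofReal t < upperLocalEntropyE T μ x ε) :
    ∃ᶠ n : ℕ in atTop, μ (bowenBall T n x ε) ≤ ENNReal.ofReal (Real.exp (-t * n)) := by
  refine ((frequently_lt_of_lt_limsup (by isBoundedDefault) h).and_eventually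
    (eventually_gt_atTop 0)).mono fun n ⟨hn, hn0⟩ => not_lt.1 fun hlt => ?_
  exact lt_asymm hn ((negLogDiv_lt_ofReal_iff (measure_ne_top μ _) hn0 ht).2 hlt)

lemma exists_measure_lt_upperLocalEntropyE_pos {E : Set X} {r : ℝ≥0∞} (hE : 0 < μ E)
    (h : ∀ x ∈ E, r < upperLocalEntropy T μ x) :
    ∃ ε > 0, 0 < μ {x ∈ E | r < upperLocalEntropyE T μ x ε} := by
  have hcover : E ⊆ ⋃ k : ℕ, {x ∈ E | r < upperLocalEntropyE T μ x (1 / (k + 1))} := by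
    intro x hx
    obtain ⟨⟨ε, hε⟩, hlt⟩ := lt_iSup_iff.1 (h x hx)
    obtain ⟨k, hk⟩ := exists_nat_one_div_lt hε
    exact mem_iUnion.2 ⟨k, hx, hlt.trans_le (antitone_upperLocalEntropyE hk.le)⟩
  by_contra! h0
  refine hE.ne' (measure_mono_null hcover (measure_iUnion_null fun k => ?_))
  exact nonpos_iff_eq_zero.1 (h0 _ (by positivity))

end LocalEntropy

lemma ofReal_exp_mul_ofReal_exp (a b : ℝ) :
    ENNReal.ofReal (Real.exp a) * ENNReal.ofReal (Real.exp b) =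
      ENNReal.ofReal (Real.exp (a + b)) := by
  rw [← ENNReal.ofReal_mul (Real.exp_pos a).le, Real.exp_add]

lemma tsum_ofReal_exp_neg_mul_ne_top {c : ℝ} (hc : 0 < c) :
    ∑' N : ℕ, ENNReal.ofReal (Real.exp (-c * N)) ≠ ⊤ := by
  have hsum : Summable fun N : ℕ => Real.exp (-c * N) := by
    simpa only [mul_comm] using Real.summable_exp_nat_mul_iff.2 (neg_neg_of_pos hc)
  rw [← ENNReal.ofReal_tsum_of_nonneg (fun _ => (Real.exp_pos _).le) hsum]
  exact ENNReal.ofReal_ne_top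

section UpperBound
variable {X : Type*} [MetricSpace X] [MeasurableSpace X] [OpensMeasurableSpace X] {T : X → X}
  (hT : Continuous T) (μ : Measure X) {ε t t' : ℝ}
include hT

lemma packPe_le_of_exp_le_measure {Z : Set X} {N : ℕ} (htt' : t ≤ t')
    (hZ : ∀ x ∈ Z, ∀ n ≥ N, ENNReal.ofReal (Real.exp (-t * n)) ≤ μ (bowenBall T n x ε)) :
    packPe T t' ε Z ≤ ENNReal.ofReal (Real.exp (-(t' - t) * N)) * μ univ := by
  refine (iInf_le _ N).trans (sSup_le ?_)
  rintro _ ⟨J, x, n, hJ, hdisj, rfl⟩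
  set c := ENNReal.ofReal (Real.exp (-(t' - t) * N))
  have hterm : ∀ i : J, ENNReal.ofReal (Real.exp (-t' * n i)) ≤
      c * μ (closedBowenBall T (n i) (x i) ε) := fun i => by
    obtain ⟨hxZ, hNn⟩ := hJ i i.2
    have hNn' : (N : ℝ) ≤ n i := by exact_mod_cast hNn
    calc ENNReal.ofReal (Real.exp (-t' * n i))
        ≤ c * ENNReal.ofReal (Real.exp (-t * n i)) := by
          rw [ofReal_exp_mul_ofReal_exp]; gcongr; nlinarith
      _ ≤ c * μ (closedBowenBall T (n i) (x i) ε) := by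
          gcongr
          exact (hZ _ hxZ _ hNn).trans (measure_mono bowenBall_subset_closedBowenBall)
  calc ∑' i : J, ENNReal.ofReal (Real.exp (-t' * n i))
      ≤ ∑' i : J, c * μ (closedBowenBall T (n i) (x i) ε) := ENNReal.tsum_le_tsum hterm
    _ = c * μ (⋃ i ∈ J, closedBowenBall T (n i) (x i) ε) := by
        rw [ENNReal.tsum_mul_left, measure_biUnion J.to_countable hdisj
          fun _ _ => (isClosed_closedBowenBall hT).measurableSet]
    _ ≤ c * μ univ := by gcongr; exact subset_univ _

lemma packMeasE_ne_top_of_upperLocalEntropyE_lt [IsFiniteMeasure μ] {E : Set X} (ht : 0 < t)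
    (htt' : t < t') (h : ∀ x ∈ E, upperLocalEntropyE T μ x ε < ENNReal.ofReal t) :
    packMeasE T t' ε E ≠ ⊤ := by
  set Es : ℕ → Set X := fun N =>
    {x ∈ E | ∀ n ≥ N, ENNReal.ofReal (Real.exp (-t * n)) ≤ μ (bowenBall T n x ε)}
  have hcover : E ⊆ ⋃ N, Es N := fun x hx => by
    obtain ⟨N, hN⟩ := eventually_atTop.1 (eventually_exp_le_measure_bowenBall ht (h x hx))
    exact mem_iUnion.2 ⟨N, hx, hN⟩
  refine ne_top_of_le_ne_top ?_ ((iInf₂_le Es hcover).trans (ENNReal.tsum_le_tsum fun N =>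
    packPe_le_of_exp_le_measure hT μ htt'.le fun x hx => hx.2))
  rw [ENNReal.tsum_mul_right]
  exact ENNReal.mul_ne_top (tsum_ofReal_exp_neg_mul_ne_top (sub_pos.2 htt')) (measure_ne_top μ _)

theorem packEntropy_le_of_upperLocalEntropy_le [IsFiniteMeasure μ] {E : Set X} {r : ℝ≥0∞}
    (h : ∀ x ∈ E, upperLocalEntropy T μ x ≤ r) : packEntropy T E ≤ r := by
  refine iSup_le fun ⟨ε, hε⟩ => packEntropyE_le fun s hrs => ?_
  obtain ⟨t, -, hrt, hts⟩ := ENNReal.lt_iff_exists_real_btwn.1 hrs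
  have ht : 0 < t := ENNReal.ofReal_pos.1 (zero_le.trans_lt hrt)
  rw [← ENNReal.ofReal_coe_nnreal, ENNReal.ofReal_lt_ofReal_iff_of_nonneg ht.le] at hts
  exact packMeasE_ne_top_of_upperLocalEntropyE_lt hT μ ht hts fun x hx =>
    ((upperLocalEntropyE_le_upperLocalEntropy hε).trans (h x hx)).trans_lt hrt

end UpperBound

section LowerBound
variable {X : Type*} [MetricSpace X] [TopologicalSpace.SeparableSpace X] [MeasurableSpace X]
  {T : X → X} (hT : Continuous T) (μ : Measure X) {ε t t' : ℝ} {F : Set X}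
include hT

lemma ofReal_exp_mul_measure_le_packP {Z : Set X} {N M : ℕ} (hε : 0 < ε) (htt' : t' < t)
    (hNM : N ≤ M) (hF : ∀ x ∈ F, ∃ᶠ n : ℕ in atTop,
      μ (bowenBall T n x ε) ≤ ENNReal.ofReal (Real.exp (-t * n))) :
    ENNReal.ofReal (Real.exp ((t - t') * M)) * μ (Z ∩ F) ≤ packP T t' N (ε / 4) Z := by
  have hn : ∀ x ∈ Z ∩ F, ∃ n ≥ M, μ (bowenBall T n x ε) ≤ ENNReal.ofReal (Real.exp (-t * n)) :=
    fun x hx => ((hF x hx.2).and_eventually (eventually_ge_atTop M)).exists.imp fun _ h =>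
      ⟨h.2, h.1⟩
  choose! n hnM hn using hn
  have hε4 : 0 < ε / 4 := by positivity
  obtain ⟨I, hIS, hdisj, hcov⟩ := exists_pairwiseDisjoint_closedBowenBall_cover (T := T) _ hε4 n
  rw [mul_div_cancel₀ ε four_ne_zero] at hcov
  have hI := countable_of_pairwiseDisjoint_closedBowenBall hT hε4 hdisj
  set c := ENNReal.ofReal (Real.exp ((t - t') * M))
  calc c * μ (Z ∩ F)
      ≤ c * ∑' x : I, μ (bowenBall T (n x) x ε) := by
        gcongr
        exact (measure_mono hcov).trans (measure_biUnion_le μ hI _)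
    _ = ∑' x : I, c * μ (bowenBall T (n x) x ε) := ENNReal.tsum_mul_left.symm
    _ ≤ ∑' x : I, ENNReal.ofReal (Real.exp (-t' * n x)) := ENNReal.tsum_le_tsum fun x => by
        have hMn : (M : ℝ) ≤ n x := by exact_mod_cast hnM x (hIS x.2)
        calc c * μ (bowenBall T (n x) x ε)
            ≤ c * ENNReal.ofReal (Real.exp (-t * n x)) := by gcongr; exact hn x (hIS x.2)
          _ ≤ ENNReal.ofReal (Real.exp (-t' * n x)) := by
              rw [ofReal_exp_mul_ofReal_exp]; gcongr; nlinarith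
    _ ≤ packP T t' N (ε / 4) Z := tsum_le_packP hI (hIS.trans inter_subset_left)
        (fun x hx => hNM.trans (hnM x (hIS hx))) hdisj

lemma packPe_eq_top {Z : Set X} (hε : 0 < ε) (htt' : t' < t)
    (hF : ∀ x ∈ F, ∃ᶠ n : ℕ in atTop,
      μ (bowenBall T n x ε) ≤ ENNReal.ofReal (Real.exp (-t * n)))
    (hpos : 0 < μ (Z ∩ F)) : packPe T t' (ε / 4) Z = ⊤ := by
  refine iInf_eq_top.2 fun N => eq_top_iff.2 (le_of_tendsto ?_
    (eventually_atTop.2 ⟨N, fun M hNM => ofReal_exp_mul_measure_le_packP hT μ hε htt' hNM hF⟩))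
  have hexp : Tendsto (fun M : ℕ => ENNReal.ofReal (Real.exp ((t - t') * M))) atTop (𝓝 ⊤) :=
    ENNReal.tendsto_ofReal_atTop.comp (Real.tendsto_exp_atTop.comp
      (tendsto_natCast_atTop_atTop.const_mul_atTop (sub_pos.2 htt')))
  simpa only [ENNReal.top_mul hpos.ne'] using
    ENNReal.Tendsto.mul_const (b := μ (Z ∩ F)) hexp (.inl ENNReal.top_ne_zero)

lemma packMeasE_eq_top {E : Set X} (hε : 0 < ε) (htt' : t' < t) (hFE : F ⊆ E)
    (hF : ∀ x ∈ F, ∃ᶠ n : ℕ in atTop,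
      μ (bowenBall T n x ε) ≤ ENNReal.ofReal (Real.exp (-t * n)))
    (hpos : 0 < μ F) : packMeasE T t' (ε / 4) E = ⊤ := by
  refine iInf₂_eq_top.2 fun Zi hZi => ?_
  obtain ⟨i, hi⟩ : ∃ i, 0 < μ (Zi i ∩ F) := by
    by_contra! h0
    refine hpos.ne' (measure_mono_null (fun x hx => ?_)
      (measure_iUnion_null fun i => nonpos_iff_eq_zero.1 (h0 i)))
    obtain ⟨i, hi⟩ := mem_iUnion.1 (hZi (hFE hx))
    exact mem_iUnion.2 ⟨i, hi, hx⟩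
  exact ENNReal.tsum_eq_top_of_eq_top ⟨i, packPe_eq_top hT μ hε htt' hF hi⟩

theorem le_packEntropy_of_le_upperLocalEntropy [IsFiniteMeasure μ] {E : Set X} {r : ℝ≥0∞}
    (hE : 0 < μ E) (h : ∀ x ∈ E, r ≤ upperLocalEntropy T μ x) : r ≤ packEntropy T E := by
  refine ENNReal.le_of_forall_nnreal_lt fun s hsr => ?_
  obtain ⟨t, -, hst, htr⟩ := ENNReal.lt_iff_exists_real_btwn.1 hsr
  rw [← ENNReal.ofReal_coe_nnreal, ENNReal.ofReal_lt_ofReal_iff_of_nonneg s.coe_nonneg] at hst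
  have ht : 0 < t := s.coe_nonneg.trans_lt hst
  obtain ⟨ε, hε, hF⟩ :=
    exists_measure_lt_upperLocalEntropyE_pos hE fun x hx => htr.trans_le (h x hx)
  have htop := packMeasE_eq_top hT μ hε hst (sep_subset _ _)
    (fun x hx => frequently_measure_bowenBall_le ht hx.2) hF
  exact (le_packEntropyE htop).trans (packEntropyE_le_packEntropy (by positivity))

end LowerBound

theorem stmt4_general {X : Type*} [MetricSpace X] [CompactSpace X] [MeasurableSpace X] [BorelSpace X]
    (T : X → X) (hT : Continuous T)
    (E : Set X)
    (μ : Measure X) (hprob : IsProbabilityMeasure μ) (s : ℝ) :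
    ((∀ x ∈ E, upperLocalEntropy T μ x ≤ ENNReal.ofReal s) →
      packEntropy T E ≤ ENNReal.ofReal s) ∧
    ((0 < μ E ∧ ∀ x ∈ E, ENNReal.ofReal s ≤ upperLocalEntropy T μ x) →
      ENNReal.ofReal s ≤ packEntropy T E) :=
  ⟨packEntropy_le_of_upperLocalEntropy_le hT μ,
    fun ⟨hE, h⟩ => le_packEntropy_of_le_upperLocalEntropy hT μ hE h⟩

/-- (a) If `h̄_μ(T,x) ≤ s` for all `x ∈ E` then `h^P_top(T,E) ≤ s`.
(b) If `μ(E) > 0` and `h̄_μ(T,x) ≥ s` for all `x ∈ E` then `h^P_top(T,E) ≥ s`. -/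
theorem stmt4 {X : Type*} [MetricSpace X] [CompactSpace X] [MeasurableSpace X] [BorelSpace X]
    (T : X → X) (hT : Continuous T)
    (E : Set X) (hE : MeasureTheory.AnalyticSet E)
    (μ : Measure X) (hprob : IsProbabilityMeasure μ) (s : ℝ) (hs : 0 ≤ s) :
    ((∀ x ∈ E, upperLocalEntropy T μ x ≤ ENNReal.ofReal s) →
      packEntropy T E ≤ ENNReal.ofReal s) ∧
    ((0 < μ E ∧ ∀ x ∈ E, ENNReal.ofReal s ≤ upperLocalEntropy T μ x) →
      ENNReal.ofReal s ≤ packEntropy T E) :=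
  stmt4_general T hT E μ hprob s
end

section
/- Let (X,T) be a topological dynamical system, Z ⊂ X an analytic set with h^B_top(T,Z) > 0, and suppose there exists a gauge function b : ℕ → ℝ_{>0} such that M^b(Z) > 0 and lim_{n→∞} e^{ns} b(n) = 0 for every s < h^B_top(T,Z). Then Z has no increasing countable slice of Bowen entropy: Z cannot be written as a countable union of analytic sets Z_i with h^B_top(T,Z_i) < h^B_top(T,Z) for all i. -/
open Filter Set MeasureTheory Topology
open scoped ENNReal NNReal

/-!
Each piece `Zᵢ` has entropy below some `sᵢ < h^B_top(T,Z)`, so `M^{sᵢ}_ε(Zᵢ) < ∞`; since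
`e^{n sᵢ} b(n) → 0`, the gauge `b` is negligible against `e^{-n sᵢ}` and hence `M^b_ε(Zᵢ) = 0`.
Countable subadditivity then gives `M^b_ε(Z) = 0` for every `ε`, contradicting `M^b(Z) > 0`.
-/

section

variable {X : Type*} [MetricSpace X] {T : X → X} {b g : ℕ → ℝ} {N : ℕ} {ε : ℝ}

lemma bowenM_mono_level {N N' : ℕ} (h : N ≤ N') (Z : Set X) :
    bowenM T b N ε Z ≤ bowenM T b N' ε Z :=
  sInf_le_sInf fun _ ⟨x, n, hn, hcov, hr⟩ => ⟨x, n, fun i => h.trans (hn i), hcov, hr⟩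

lemma bowenM_le_bowenMe (Z : Set X) : bowenM T b N ε Z ≤ bowenMe T b ε Z :=
  le_iSup (fun N => bowenM T b N ε Z) N

lemma bowenM_le_mul_bowenM {δ : ℝ} (hδ : 0 < δ) (hbg : ∀ n ≥ N, b n ≤ δ * g n) (Z : Set X) :
    bowenM T b N ε Z ≤ ENNReal.ofReal δ * bowenM T g N ε Z := by
  have hδ₀ : ENNReal.ofReal δ ≠ 0 := by simpa using hδ
  calc bowenM T b N ε Z = ENNReal.ofReal δ * (bowenM T b N ε Z / ENNReal.ofReal δ) :=
        (ENNReal.mul_div_cancel hδ₀ ENNReal.ofReal_ne_top).symm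
    _ ≤ ENNReal.ofReal δ * bowenM T g N ε Z := by
        gcongr
        refine le_sInf fun r ⟨x, n, hn, hcov, hr⟩ => ENNReal.div_le_of_le_mul' ?_
        calc bowenM T b N ε Z ≤ ∑' i, ENNReal.ofReal (b (n i)) := sInf_le ⟨x, n, hn, hcov, rfl⟩
          _ ≤ ∑' i, ENNReal.ofReal δ * ENNReal.ofReal (g (n i)) := by
              refine ENNReal.tsum_le_tsum fun i => ?_
              rw [← ENNReal.ofReal_mul hδ.le]
              exact ENNReal.ofReal_le_ofReal (hbg _ (hn i))
          _ = ENNReal.ofReal δ * r := by rw [ENNReal.tsum_mul_left, hr]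

lemma bowenMe_le_mul_bowenMe {δ : ℝ} (hδ : 0 < δ) (hbg : ∀ᶠ n in atTop, b n ≤ δ * g n)
    (Z : Set X) : bowenMe T b ε Z ≤ ENNReal.ofReal δ * bowenMe T g ε Z := by
  obtain ⟨N₀, hN₀⟩ := eventually_atTop.1 hbg
  refine iSup_le fun N => ?_
  calc bowenM T b N ε Z ≤ bowenM T b (max N N₀) ε Z := bowenM_mono_level (le_max_left _ _) Z
    _ ≤ ENNReal.ofReal δ * bowenM T g (max N N₀) ε Z :=
        bowenM_le_mul_bowenM hδ (fun n hn => hN₀ n ((le_max_right _ _).trans hn)) Z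
    _ ≤ ENNReal.ofReal δ * bowenMe T g ε Z := by gcongr; exact bowenM_le_bowenMe Z

lemma bowenMe_eq_zero_of_isLittleO (hg : ∀ n, 0 ≤ g n) (hbg : b =o[atTop] g) (Z : Set X)
    (hfin : bowenMe T g ε Z ≠ ⊤) : bowenMe T b ε Z = 0 := by
  have hle : ∀ δ > 0, bowenMe T b ε Z ≤ ENNReal.ofReal δ * bowenMe T g ε Z := fun δ hδ =>
    bowenMe_le_mul_bowenMe hδ ((hbg.def hδ).mono fun n hn => by
      simpa [Real.norm_eq_abs, abs_of_nonneg (hg n)] using (le_abs_self (b n)).trans hn) Z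
  have hlim : Tendsto (fun δ : ℝ => ENNReal.ofReal δ * bowenMe T g ε Z) (𝓝[>] 0) (𝓝 0) := by
    simpa using ENNReal.Tendsto.mul_const
      (ENNReal.tendsto_ofReal (tendsto_nhdsWithin_of_tendsto_nhds (tendsto_id (x := 𝓝 (0 : ℝ)))))
      (Or.inr hfin)
  exact nonpos_iff_eq_zero.1 (ge_of_tendsto hlim (eventually_nhdsWithin_of_forall hle))

lemma bowenM_iUnion_le (Zi : ℕ → Set X) :
    bowenM T b N ε (⋃ i, Zi i) ≤ ∑' i, bowenM T b N ε (Zi i) := by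
  refine ENNReal.le_of_forall_pos_le_add fun η hη hfin => ?_
  obtain ⟨η', hη'pos, hη'sum⟩ :=
    ENNReal.exists_pos_sum_of_countable' (ENNReal.coe_ne_zero.2 hη.ne') ℕ
  have hcover : ∀ i, ∃ (x : ℕ → X) (n : ℕ → ℕ), (∀ j, N ≤ n j) ∧
      Zi i ⊆ ⋃ j, bowenBall T (n j) (x j) ε ∧
      ∑' j, ENNReal.ofReal (b (n j)) < bowenM T b N ε (Zi i) + η' i := fun i => by
    have hi : bowenM T b N ε (Zi i) ≠ ⊤ := ENNReal.ne_top_of_tsum_ne_top hfin.ne i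
    obtain ⟨_, ⟨x, n, hn, hcov, rfl⟩, hlt⟩ :=
      sInf_lt_iff.1 (ENNReal.lt_add_right hi (hη'pos i).ne')
    exact ⟨x, n, hn, hcov, hlt⟩
  choose x n hn hcov hsum using hcover
  have hcov' :
      ⋃ i, Zi i ⊆ ⋃ k : ℕ, bowenBall T (n k.unpair.1 k.unpair.2) (x k.unpair.1 k.unpair.2) ε := by
    intro z hz
    obtain ⟨i, hzi⟩ := mem_iUnion.1 hz
    obtain ⟨j, hj⟩ := mem_iUnion.1 (hcov i hzi)
    exact mem_iUnion.2 ⟨Nat.pair i j, by simpa only [Nat.unpair_pair] using hj⟩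
  calc bowenM T b N ε (⋃ i, Zi i)
      ≤ ∑' k : ℕ, ENNReal.ofReal (b (n k.unpair.1 k.unpair.2)) :=
        sInf_le ⟨_, _, fun k => hn _ _, hcov', rfl⟩
    _ = ∑' i, ∑' j, ENNReal.ofReal (b (n i j)) := by
        rw [← ENNReal.tsum_prod' (f := fun p : ℕ × ℕ => ENNReal.ofReal (b (n p.1 p.2)))]
        exact Nat.pairEquiv.symm.tsum_eq (fun p : ℕ × ℕ => ENNReal.ofReal (b (n p.1 p.2)))
    _ ≤ ∑' i, (bowenM T b N ε (Zi i) + η' i) := ENNReal.tsum_le_tsum fun i => (hsum i).le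
    _ ≤ ∑' i, bowenM T b N ε (Zi i) + η := by
        rw [ENNReal.tsum_add]
        gcongr

lemma bowenMe_iUnion_le (Zi : ℕ → Set X) :
    bowenMe T b ε (⋃ i, Zi i) ≤ ∑' i, bowenMe T b ε (Zi i) :=
  iSup_le fun _ => (bowenM_iUnion_le Zi).trans
    (ENNReal.tsum_le_tsum fun i => bowenM_le_bowenMe (Zi i))

lemma bowenMe_exp_ne_top {Z : Set X} {s : ℝ} (hε : 0 < ε)
    (hs : bowenEntropy T Z < ENNReal.ofReal s) :
    bowenMe T (fun n => Real.exp (-s * n)) ε Z ≠ ⊤ := by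
  intro htop
  have hs₀ : 0 ≤ s := (ENNReal.ofReal_pos.1 (hs.trans_le' zero_le)).le
  have hle : (s.toNNReal : ℝ≥0∞) ≤ bowenEntropyE T ε Z :=
    le_iSup_of_le (ι := {t : ℝ≥0 // bowenMe T (fun n => Real.exp (-(t : ℝ) * n)) ε Z = ⊤})
      ⟨s.toNNReal, by rwa [Real.coe_toNNReal s hs₀]⟩ le_rfl
  exact (hle.trans (le_iSup_of_le (⟨ε, hε⟩ : {e : ℝ // 0 < e}) le_rfl)).not_gt hs

lemma isLittleO_exp_neg_of_tendsto {s : ℝ}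
    (hb : Tendsto (fun n : ℕ => Real.exp (n * s) * b n) atTop (𝓝 0)) :
    b =o[atTop] fun n => Real.exp (-s * n) := by
  refine (Asymptotics.isLittleO_iff_tendsto' (Eventually.of_forall fun n h =>
    absurd h (Real.exp_pos _).ne')).2 (hb.congr fun n => ?_)
  rw [div_eq_mul_inv, ← Real.exp_neg, mul_comm]
  ring_nf

lemma bowenMe_eq_zero_of_bowenEntropy_lt {Z : Set X} {s : ℝ} (hε : 0 < ε)
    (hs : bowenEntropy T Z < ENNReal.ofReal s)
    (hb : Tendsto (fun n : ℕ => Real.exp (n * s) * b n) atTop (𝓝 0)) :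
    bowenMe T b ε Z = 0 :=
  bowenMe_eq_zero_of_isLittleO (fun _ => (Real.exp_pos _).le) (isLittleO_exp_neg_of_tendsto hb) Z
    (bowenMe_exp_ne_top hε hs)

end

theorem stmt7_general {X : Type*} [MetricSpace X]
    (T : X → X) (Z : Set X) (b : ℕ → ℝ)
    (hMb : 0 < bowenMFull T b Z)
    (hdecay : ∀ s : ℝ, ENNReal.ofReal s < bowenEntropy T Z →
      Tendsto (fun n : ℕ => Real.exp ((n : ℝ) * s) * b n) atTop (nhds 0)) :
    ¬ ∃ Zi : ℕ → Set X, (∀ i, MeasureTheory.AnalyticSet (Zi i)) ∧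
        Z = ⋃ i, Zi i ∧ ∀ i, bowenEntropy T (Zi i) < bowenEntropy T Z := by
  rintro ⟨Zi, -, rfl, hlt⟩
  obtain ⟨⟨ε, hε⟩, hMε⟩ := lt_iSup_iff.1 hMb
  have hpiece : ∀ i, bowenMe T b ε (Zi i) = 0 := fun i => by
    obtain ⟨c, hic, hc⟩ := exists_between (hlt i)
    rw [← ENNReal.ofReal_toReal (hc.trans_le le_top).ne] at hic hc
    exact bowenMe_eq_zero_of_bowenEntropy_lt hε hic (hdecay _ hc)
  have hzero : bowenMe T b ε (⋃ i, Zi i) = 0 :=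
    nonpos_iff_eq_zero.1 ((bowenMe_iUnion_le Zi).trans (by simp [hpiece]))
  exact hMε.ne' hzero

/-- If there is a gauge function `b` with `M^b(Z) > 0` and `e^{ns} b(n) → 0` for
every `s < h^B_top(T,Z)`, then `Z` has no increasing countable slice of Bowen
entropy. -/
theorem stmt7 {X : Type*} [MetricSpace X] [CompactSpace X] [MeasurableSpace X] [BorelSpace X]
    (T : X → X) (hT : Continuous T)
    (Z : Set X) (hZ : MeasureTheory.AnalyticSet Z) (hpos : 0 < bowenEntropy T Z)
    (b : ℕ → ℝ) (hb : GaugeSeq b)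
    (hMb : 0 < bowenMFull T b Z)
    (hdecay : ∀ s : ℝ, ENNReal.ofReal s < bowenEntropy T Z →
      Tendsto (fun n : ℕ => Real.exp ((n : ℝ) * s) * b n) atTop (nhds 0)) :
    ¬ ∃ Zi : ℕ → Set X, (∀ i, MeasureTheory.AnalyticSet (Zi i)) ∧
        Z = ⋃ i, Zi i ∧ ∀ i, bowenEntropy T (Zi i) < bowenEntropy T Z :=
  stmt7_general T Z b hMb hdecay
end

section
/- There exists a Borel subset Z ⊂ [0,1] with dim_H(Z) = 1 that has no measure of full lower Hausdorff dimension, but does have a measure of full upper Hausdorff dimension: there is a Borel probability measure μ with μ(Z) = 1 and dim̄_H(μ) = dim_H(Z) = 1. -/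
/-!
For `0 < r < 1/2` let `K_r` be the image of the binary sequences under
`ω ↦ ∑ ωᵢ (1 - r) rⁱ`, and `μ_r` the image of Lebesgue measure on `[0, 1)` under
`x ↦ ∑ xᵢ (1 - r) rⁱ`, where `xᵢ` are the binary digits of `x`; let `s` solve `2 rˢ = 1`.
Covering `K_r` by `2ᵏ` intervals of length `rᵏ` gives `dim_H K_r ≤ s`. Since `r < 1/2`, two
points of `K_r` at distance `< (1 - 2r) rᵏ` have codes sharing their first `k` digits, so
reading a point of `K_r` back in base `2` is `s`-Hölder; it maps every set of positive
`μ_r`-measure onto a set of positive Lebesgue measure, so such sets have dimension `≥ s`.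

Take `Z = ⋃ₙ K_{rₙ}` with `sₙ ↑ 1`. A measure charging `Z` charges some `K_{rₙ}`, so its lower
dimension is at most `sₙ < 1`. The mixture `∑ 2⁻ⁿ⁻¹ μ_{rₙ}` dominates every `μ_{rₙ}`, so each
set of full mixture measure has dimension `≥ sup sₙ = 1`.
-/

open Filter Set MeasureTheory Topology
open scoped ENNReal NNReal

/-- Lower Hausdorff dimension of a measure:
`inf { dim_H E : E μ-measurable, μ E > 0 }`. -/
noncomputable def lowerDimH {α : Type*} [EMetricSpace α] [MeasurableSpace α]
    (μ : Measure α) : ℝ≥0∞ :=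
  sInf { d : ℝ≥0∞ | ∃ E : Set α, NullMeasurableSet E μ ∧ 0 < μ E ∧ d = dimH E }

/-- Upper Hausdorff dimension of a measure:
`inf { dim_H E : E μ-measurable, μ Eᶜ = 0 }`. -/
noncomputable def upperDimH {α : Type*} [EMetricSpace α] [MeasurableSpace α]
    (μ : Measure α) : ℝ≥0∞ :=
  sInf { d : ℝ≥0∞ | ∃ E : Set α, NullMeasurableSet E μ ∧ μ Eᶜ = 0 ∧ d = dimH E }

theorem MeasureTheory.Measure.sum_smul_apply_of_forall_eq_one {α ι : Type*}
    [MeasurableSpace α] {ν : ι → Measure α} {w : ι → ℝ≥0∞} {S : Set α} (hS : MeasurableSet S)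
    (h : ∀ i, ν i S = 1) : Measure.sum (fun i => w i • ν i) S = ∑' i, w i := by
  simp [Measure.sum_apply _ hS, h]

theorem HolderOnWith.of_dist_le {X Y : Type*} [PseudoMetricSpace X] [PseudoMetricSpace Y]
    {C r : ℝ≥0} {f : X → Y} {s : Set X}
    (h : ∀ x ∈ s, ∀ y ∈ s, dist (f x) (f y) ≤ C * dist x y ^ (r : ℝ)) :
    HolderOnWith C r f s := by
  intro x hx y hy
  rw [edist_nndist, edist_nndist, ← ENNReal.coe_rpow_of_nonneg _ r.coe_nonneg, ← ENNReal.coe_mul,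
    ENNReal.coe_le_coe, ← NNReal.coe_le_coe]
  exact h x hx y hy

theorem ENNReal.tsum_inv_two_pow_succ : ∑' n : ℕ, (2⁻¹ : ℝ≥0∞) ^ (n + 1) = 1 := by
  rw [ENNReal.tsum_geometric_add_one, ENNReal.one_sub_inv_two, inv_inv,
    ENNReal.inv_mul_cancel two_ne_zero ENNReal.ofNat_ne_top]

theorem Real.measurable_digits (b : ℕ) [NeZero b] : Measurable fun x : ℝ => Real.digits x b :=
  measurable_pi_lambda _ fun _ =>
    (measurable_of_countable _).comp (measurable_id.mul_const _).nat_floor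

section DimensionOfMeasures

variable {α : Type*} [EMetricSpace α] [MeasurableSpace α] {μ ν : Measure α} {E : Set α}

theorem lowerDimH_le_dimH (hE : NullMeasurableSet E μ) (h : μ E ≠ 0) :
    lowerDimH μ ≤ dimH E :=
  sInf_le ⟨E, hE, pos_iff_ne_zero.2 h, rfl⟩

theorem upperDimH_le_dimH (hE : NullMeasurableSet E μ) (h : μ Eᶜ = 0) :
    upperDimH μ ≤ dimH E :=
  sInf_le ⟨E, hE, h, rfl⟩

theorem le_lowerDimH {d : ℝ≥0∞} (h : ∀ E, MeasurableSet E → μ E ≠ 0 → d ≤ dimH E) :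
    d ≤ lowerDimH μ := by
  refine le_sInf ?_
  rintro _ ⟨E, hE, hμE, rfl⟩
  obtain ⟨F, hFE, hF, hFE_ae⟩ := hE.exists_measurable_subset_ae_eq
  exact (h F hF (by rw [measure_congr hFE_ae]; exact hμE.ne')).trans (dimH_mono hFE)

theorem lowerDimH_le_upperDimH [NeZero μ] : lowerDimH μ ≤ upperDimH μ := by
  refine le_sInf ?_
  rintro _ ⟨E, hE, hEc, rfl⟩
  refine lowerDimH_le_dimH hE fun hE0 => NeZero.ne μ ?_
  rw [← Measure.measure_univ_eq_zero, ← union_compl_self E]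
  exact measure_union_null hE0 hEc

theorem upperDimH_mono_of_absolutelyContinuous (h : ν ≪ μ) : upperDimH ν ≤ upperDimH μ := by
  refine le_sInf ?_
  rintro _ ⟨E, hE, hEc, rfl⟩
  exact upperDimH_le_dimH (hE.mono_ac h) (h hEc)

theorem iSup_lowerDimH_le_upperDimH_sum_smul {ι : Type*} {ν : ι → Measure α}
    (hν : ∀ i, ν i ≠ 0) {w : ι → ℝ≥0∞} (hw : ∀ i, w i ≠ 0) :
    ⨆ i, lowerDimH (ν i) ≤ upperDimH (Measure.sum fun i => w i • ν i) :=
  iSup_le fun i =>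
    have := NeZero.mk (hν i)
    lowerDimH_le_upperDimH.trans <| upperDimH_mono_of_absolutelyContinuous <|
      (Measure.absolutelyContinuous_smul (hw i)).trans
        (Measure.absolutelyContinuous_of_le (Measure.le_sum _ i))

theorem lowerDimH_lt_of_measure_iUnion_ne_zero {ι : Type*} [Countable ι] {K : ι → Set α}
    {d : ℝ≥0∞} (hK : ∀ i, NullMeasurableSet (K i) μ) (hμ : μ (⋃ i, K i) ≠ 0)
    (hd : ∀ i, dimH (K i) < d) : lowerDimH μ < d := by
  obtain ⟨i, hi⟩ : ∃ i, μ (K i) ≠ 0 := by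
    by_contra! h
    exact hμ (measure_iUnion_null h)
  exact (lowerDimH_le_dimH (hK i) hi).trans_lt (hd i)

end DimensionOfMeasures

/-- The weights `(1 - r) rⁱ` sum to `1`; for `r = 1/2` this is `Real.ofDigits`. -/
noncomputable def cantorCoding (r : ℝ) (ω : ℕ → Fin 2) : ℝ :=
  ∑' i, (ω i : ℝ) * ((1 - r) * r ^ i)

noncomputable def cantorMeasure (r : ℝ) : Measure ℝ :=
  (volume.restrict (Ico 0 1)).map fun x => cantorCoding r (Real.digits x 2)

theorem fin_two_coe_mem_Icc (a : Fin 2) : (a : ℝ) ∈ Icc (0 : ℝ) 1 :=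
  ⟨Nat.cast_nonneg _, Nat.cast_le_one.2 (Fin.is_le a)⟩

theorem abs_fin_two_sub_of_ne {a b : Fin 2} (h : a ≠ b) : |(a : ℝ) - b| = 1 := by
  fin_cases a <;> fin_cases b <;> simp_all

section CantorCoding

variable {r : ℝ} (hr0 : 0 < r) (hr1 : r < 1)
include hr0 hr1

theorem summable_one_sub_mul_pow : Summable fun i : ℕ => (1 - r) * r ^ i :=
  (summable_geometric_of_lt_one hr0.le hr1).mul_left _

theorem abs_cantorCoding_term_le (ω : ℕ → Fin 2) (i : ℕ) :
    |(ω i : ℝ) * ((1 - r) * r ^ i)| ≤ (1 - r) * r ^ i := by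
  have hw : 0 ≤ (1 - r) * r ^ i := mul_nonneg (by linarith) (pow_nonneg hr0.le i)
  rw [abs_mul, abs_of_nonneg hw, abs_of_nonneg (fin_two_coe_mem_Icc _).1]
  exact mul_le_of_le_one_left hw (fin_two_coe_mem_Icc _).2

theorem summable_cantorCoding (ω : ℕ → Fin 2) :
    Summable fun i => (ω i : ℝ) * ((1 - r) * r ^ i) :=
  .of_norm_bounded (summable_one_sub_mul_pow hr0 hr1) (abs_cantorCoding_term_le hr0 hr1 ω)

theorem continuous_cantorCoding : Continuous (cantorCoding r) :=
  continuous_tsum (fun i => by fun_prop) (summable_one_sub_mul_pow hr0 hr1)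
    fun i ω => abs_cantorCoding_term_le hr0 hr1 ω i

theorem isCompact_range_cantorCoding : IsCompact (range (cantorCoding r)) :=
  isCompact_range (continuous_cantorCoding hr0 hr1)

theorem cantorCoding_eq_sum_add (ω : ℕ → Fin 2) (n : ℕ) :
    cantorCoding r ω = ∑ i ∈ Finset.range n, (ω i : ℝ) * ((1 - r) * r ^ i) +
      r ^ n * cantorCoding r (fun i => ω (i + n)) := by
  rw [cantorCoding, ← (summable_cantorCoding hr0 hr1 ω).sum_add_tsum_nat_add n, cantorCoding,
    ← tsum_mul_left]
  congr 1
  refine tsum_congr fun i => ?_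
  ring

theorem cantorCoding_mem_Icc (ω : ℕ → Fin 2) : cantorCoding r ω ∈ Icc (0 : ℝ) 1 := by
  have hgeom : ∑' i : ℕ, (1 - r) * r ^ i = 1 := by
    rw [tsum_mul_left, tsum_geometric_of_lt_one hr0.le hr1, mul_inv_cancel₀ (by linarith)]
  refine ⟨tsum_nonneg fun i => ?_, hgeom ▸ ?_⟩
  · exact mul_nonneg (fin_two_coe_mem_Icc _).1 (mul_nonneg (by linarith) (pow_nonneg hr0.le i))
  · exact (summable_cantorCoding hr0 hr1 ω).tsum_le_tsum
      (fun i => (le_abs_self _).trans (abs_cantorCoding_term_le hr0 hr1 ω i))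
      (summable_one_sub_mul_pow hr0 hr1)

theorem range_cantorCoding_subset_iUnion_Icc (k : ℕ) :
    range (cantorCoding r) ⊆ ⋃ v : Fin k → Fin 2,
      Icc (∑ i, (v i : ℝ) * ((1 - r) * r ^ (i : ℕ)))
        (∑ i, (v i : ℝ) * ((1 - r) * r ^ (i : ℕ)) + r ^ k) := by
  rintro _ ⟨ω, rfl⟩
  refine mem_iUnion.2 ⟨fun i => ω i, ?_⟩
  have htail := cantorCoding_mem_Icc hr0 hr1 (fun i => ω (i + k))
  have hrk := pow_pos hr0 k
  rw [Fin.sum_univ_eq_sum_range (fun i => (ω i : ℝ) * ((1 - r) * r ^ i)) k,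
    cantorCoding_eq_sum_add hr0 hr1 ω k]
  constructor <;> nlinarith [htail.1, htail.2]

theorem measurable_cantorCoding_digits :
    Measurable fun x : ℝ => cantorCoding r (Real.digits x 2) :=
  (continuous_cantorCoding hr0 hr1).measurable.comp (Real.measurable_digits 2)

theorem isProbabilityMeasure_cantorMeasure : IsProbabilityMeasure (cantorMeasure r) :=
  have : IsProbabilityMeasure (volume.restrict (Ico (0 : ℝ) 1)) := ⟨by simp⟩
  Measure.isProbabilityMeasure_map (measurable_cantorCoding_digits hr0 hr1).aemeasurable

theorem cantorMeasure_range : cantorMeasure r (range (cantorCoding r)) = 1 := by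
  rw [cantorMeasure, Measure.map_apply (measurable_cantorCoding_digits hr0 hr1)
    (isCompact_range_cantorCoding hr0 hr1).isClosed.measurableSet, show (fun x => cantorCoding r (Real.digits x 2)) ⁻¹' range (cantorCoding r) = univ from
    eq_univ_of_forall fun x => mem_range_self _]
  simp

theorem hausdorffMeasure_range_cantorCoding_eq_zero {s : ℝ} (hrs : r ^ s = 1 / 2) {d : ℝ≥0}
    (hd : s < d) : μH[d] (range (cantorCoding r)) = 0 := by
  set a : ∀ k : ℕ, (Fin k → Fin 2) → ℝ := fun k v => ∑ i, (v i : ℝ) * ((1 - r) * r ^ (i : ℕ))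
  have hq : 2 * r ^ (d : ℝ) < 1 := by
    have := Real.rpow_lt_rpow_of_exponent_gt hr0 hr1 hd
    rw [hrs] at this
    linarith
  have hsum : ∀ k : ℕ, ∑ v : Fin k → Fin 2, Metric.ediam (Icc (a k v) (a k v + r ^ k)) ^ (d : ℝ) =
      ENNReal.ofReal ((2 * r ^ (d : ℝ)) ^ k) := by
    intro k
    simp only [Real.ediam_Icc, add_sub_cancel_left, Finset.sum_const, Finset.card_univ,
      Fintype.card_fun, Fintype.card_fin, nsmul_eq_mul]
    rw [ENNReal.ofReal_rpow_of_nonneg (pow_nonneg hr0.le k) d.coe_nonneg,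
      ← Real.rpow_pow_comm hr0.le, mul_pow, ENNReal.ofReal_mul (by positivity),
      ENNReal.ofReal_pow zero_le_two]
    simp
  rw [← nonpos_iff_eq_zero]
  calc μH[d] (range (cantorCoding r))
      ≤ liminf (fun k => ∑ v : Fin k → Fin 2,
          Metric.ediam (Icc (a k v) (a k v + r ^ k)) ^ (d : ℝ)) atTop :=
        Measure.hausdorffMeasure_le_liminf_sum _ _ (fun k => ENNReal.ofReal (r ^ k))
          (by simpa using
            ENNReal.tendsto_ofReal (tendsto_pow_atTop_nhds_zero_of_lt_one hr0.le hr1))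
          _ (Eventually.of_forall fun k v => by simp [Real.ediam_Icc])
          (Eventually.of_forall (range_cantorCoding_subset_iUnion_Icc hr0 hr1))
    _ = 0 := by
        simp only [hsum]
        simpa using (ENNReal.tendsto_ofReal (tendsto_pow_atTop_nhds_zero_of_lt_one
          (by positivity) hq)).liminf_eq

theorem dimH_range_cantorCoding_le {s : ℝ} (hrs : r ^ s = 1 / 2) :
    dimH (range (cantorCoding r)) ≤ ENNReal.ofReal s := by
  refine dimH_le fun d hd => le_of_not_gt fun hsd => ?_
  rw [← ENNReal.ofReal_coe_nnreal, ENNReal.ofReal_lt_ofReal_iff'] at hsd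
  simp [hausdorffMeasure_range_cantorCoding_eq_zero hr0 hr1 hrs hsd.1] at hd

end CantorCoding

section CantorSeparation

variable {r : ℝ} (hr0 : 0 < r) (hr : r < 1 / 2)
include hr0 hr

theorem mul_pow_firstDiff_le_abs_cantorCoding_sub {ω ω' : ℕ → Fin 2} (h : ω ≠ ω') :
    (1 - 2 * r) * r ^ PiNat.firstDiff ω ω' ≤ |cantorCoding r ω - cantorCoding r ω'| := by
  have hr1 : r < 1 := by linarith
  set k := PiNat.firstDiff ω ω'
  have hprefix : ∑ i ∈ Finset.range k, (ω i : ℝ) * ((1 - r) * r ^ i) =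
      ∑ i ∈ Finset.range k, (ω' i : ℝ) * ((1 - r) * r ^ i) :=
    Finset.sum_congr rfl fun i hi => by
      rw [PiNat.apply_eq_of_lt_firstDiff (Finset.mem_range.1 hi)]
  have hdigit := abs_fin_two_sub_of_ne (PiNat.apply_firstDiff_ne h)
  have htail := cantorCoding_mem_Icc hr0 hr1 (fun i => ω (i + (k + 1)))
  have htail' := cantorCoding_mem_Icc hr0 hr1 (fun i => ω' (i + (k + 1)))
  set c := cantorCoding r (fun i => ω (i + (k + 1)))
  set c' := cantorCoding r (fun i => ω' (i + (k + 1)))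
  have hsplit : cantorCoding r ω - cantorCoding r ω' =
      ((ω k : ℝ) - ω' k) * ((1 - r) * r ^ k) - r ^ (k + 1) * (c' - c) := by
    rw [cantorCoding_eq_sum_add hr0 hr1 ω (k + 1), cantorCoding_eq_sum_add hr0 hr1 ω' (k + 1),
      Finset.sum_range_succ, Finset.sum_range_succ, hprefix]
    ring
  have hrk : 0 ≤ r ^ k := pow_nonneg hr0.le k
  have htail_le : |r ^ (k + 1) * (c' - c)| ≤ r ^ (k + 1) := by
    rw [abs_mul, abs_of_nonneg (pow_nonneg hr0.le _)]
    exact mul_le_of_le_one_right (pow_nonneg hr0.le _)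
      (abs_sub_le_iff.2 ⟨by linarith [htail.1, htail'.2], by linarith [htail.2, htail'.1]⟩)
  calc (1 - 2 * r) * r ^ k
      = |((ω k : ℝ) - ω' k) * ((1 - r) * r ^ k)| - r ^ (k + 1) := by
        rw [abs_mul, hdigit, abs_of_nonneg (mul_nonneg (by linarith) hrk)]; ring
    _ ≤ |((ω k : ℝ) - ω' k) * ((1 - r) * r ^ k)| - |r ^ (k + 1) * (c' - c)| := by linarith
    _ ≤ |cantorCoding r ω - cantorCoding r ω'| := hsplit ▸ abs_sub_abs_le_abs_sub _ _

theorem cantorCoding_injective : Function.Injective (cantorCoding r) := by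
  intro ω ω' h
  by_contra hne
  have hsep := mul_pow_firstDiff_le_abs_cantorCoding_sub hr0 hr hne
  rw [h, sub_self, abs_zero] at hsep
  have : 0 < (1 - 2 * r) * r ^ PiNat.firstDiff ω ω' := mul_pos (by linarith) (pow_pos hr0 _)
  linarith

variable {s : ℝ} (hs : 0 < s) (hrs : r ^ s = 1 / 2)
include hs hrs

theorem abs_ofDigits_sub_le_cantorCoding (ω ω' : ℕ → Fin 2) :
    |Real.ofDigits ω - Real.ofDigits ω'| ≤
      (|cantorCoding r ω - cantorCoding r ω'| / (1 - 2 * r)) ^ s := by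
  by_cases h : ω = ω'
  · subst h
    simp [Real.zero_rpow hs.ne']
  set k := PiNat.firstDiff ω ω'
  have hsep := mul_pow_firstDiff_le_abs_cantorCoding_sub hr0 hr h
  calc |Real.ofDigits ω - Real.ofDigits ω'|
      ≤ ((2 : ℝ) ^ k)⁻¹ := by
        exact_mod_cast Real.abs_ofDigits_sub_ofDigits_le (x := ω) (y := ω') (n := k)
          fun i hi => PiNat.apply_eq_of_lt_firstDiff hi
    _ = (r ^ k) ^ s := by rw [← Real.rpow_pow_comm hr0.le, hrs, one_div, inv_pow]
    _ ≤ (|cantorCoding r ω - cantorCoding r ω'| / (1 - 2 * r)) ^ s := by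
        refine Real.rpow_le_rpow (pow_nonneg hr0.le k) ?_ hs.le
        rw [le_div_iff₀ (by linarith)]
        linarith

theorem holderOnWith_ofDigits_comp_invFun_cantorCoding :
    HolderOnWith ((1 - 2 * r) ^ s)⁻¹.toNNReal s.toNNReal
      (Real.ofDigits ∘ Function.invFun (cantorCoding r)) (range (cantorCoding r)) := by
  refine .of_dist_le ?_
  rintro _ ⟨ω, rfl⟩ _ ⟨ω', rfl⟩
  have hg : 0 < 1 - 2 * r := by linarith
  simp only [Function.comp_apply, Function.leftInverse_invFun (cantorCoding_injective hr0 hr) _]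
  rw [Real.dist_eq, Real.dist_eq, Real.coe_toNNReal _ hs.le,
    Real.coe_toNNReal _ (inv_nonneg.2 (Real.rpow_nonneg hg.le s)), inv_mul_eq_div,
    ← Real.div_rpow (abs_nonneg _) hg.le]
  exact abs_ofDigits_sub_le_cantorCoding hr0 hr hs hrs ω ω'

theorem ofReal_le_lowerDimH_cantorMeasure : ENNReal.ofReal s ≤ lowerDimH (cantorMeasure r) := by
  have hmeas := measurable_cantorCoding_digits hr0 (hr.trans one_half_lt_one)
  refine le_lowerDimH fun E hE hE0 => ?_
  set A := (fun x => cantorCoding r (Real.digits x 2)) ⁻¹' E ∩ Ico 0 1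
  have hA : volume A ≠ 0 := by
    rwa [cantorMeasure, Measure.map_apply hmeas hE, Measure.restrict_apply (hmeas hE)] at hE0
  have hA_dim : 1 ≤ dimH A := by
    simpa using le_dimH_of_hausdorffMeasure_ne_zero (d := 1)
      (by rwa [NNReal.coe_one, hausdorffMeasure_real])
  have hA_sub : A ⊆ (Real.ofDigits ∘ Function.invFun (cantorCoding r)) ''
      (E ∩ range (cantorCoding r)) := by
    rintro x ⟨hxE, hx⟩
    refine ⟨_, ⟨hxE, mem_range_self _⟩, ?_⟩
    simp only [Function.comp_apply,
      Function.leftInverse_invFun (cantorCoding_injective hr0 hr) _,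
      Real.ofDigits_digits one_lt_two hx]
  have hdim := (hA_dim.trans (dimH_mono hA_sub)).trans
    ((holderOnWith_ofDigits_comp_invFun_cantorCoding hr0 hr hs hrs).mono
      inter_subset_right |>.dimH_image_le (Real.toNNReal_pos.2 hs))
  rw [ENNReal.le_div_iff_mul_le (Or.inl (by simpa using hs)) (Or.inl ENNReal.coe_ne_top),
    one_mul] at hdim
  exact hdim.trans (dimH_mono inter_subset_left)

end CantorSeparation

noncomputable def cantorRatio (s : ℝ) : ℝ := (1 / 2) ^ s⁻¹

theorem cantorRatio_pos (s : ℝ) : 0 < cantorRatio s :=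
  Real.rpow_pos_of_pos one_half_pos _

theorem cantorRatio_lt_half {s : ℝ} (hs0 : 0 < s) (hs1 : s < 1) : cantorRatio s < 1 / 2 := by
  simpa [cantorRatio] using Real.rpow_lt_rpow_of_exponent_gt one_half_pos one_half_lt_one
    ((one_lt_inv₀ hs0).2 hs1)

theorem cantorRatio_rpow_self {s : ℝ} (hs : s ≠ 0) : cantorRatio s ^ s = 1 / 2 := by
  rw [cantorRatio, ← Real.rpow_mul one_half_pos.le, inv_mul_cancel₀ hs, Real.rpow_one]

noncomputable def cantorDim (n : ℕ) : ℝ := 1 - 2⁻¹ ^ (n + 1)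

theorem cantorDim_pos (n : ℕ) : 0 < cantorDim n := by
  have : (2⁻¹ : ℝ) ^ (n + 1) < 1 := pow_lt_one₀ (by norm_num) (by norm_num) n.succ_ne_zero
  rw [cantorDim]
  linarith

theorem cantorDim_lt_one (n : ℕ) : cantorDim n < 1 := by
  have : (0 : ℝ) < 2⁻¹ ^ (n + 1) := by positivity
  rw [cantorDim]
  linarith

theorem tendsto_cantorDim : Tendsto cantorDim atTop (𝓝 1) := by
  have h := ((tendsto_pow_atTop_nhds_zero_of_lt_one (r := (2⁻¹ : ℝ)) (by norm_num)
    (by norm_num)).comp (tendsto_add_atTop_nat 1)).const_sub 1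
  rwa [sub_zero] at h

def cantorUnion : Set ℝ := ⋃ n, range (cantorCoding (cantorRatio (cantorDim n)))

noncomputable def cantorMixture : Measure ℝ :=
  Measure.sum fun n => (2⁻¹ : ℝ≥0∞) ^ (n + 1) • cantorMeasure (cantorRatio (cantorDim n))

section CantorUnion

variable (n : ℕ)

theorem cantorRatio_cantorDim_lt_half : cantorRatio (cantorDim n) < 1 / 2 :=
  cantorRatio_lt_half (cantorDim_pos n) (cantorDim_lt_one n)

theorem cantorRatio_cantorDim_lt_one : cantorRatio (cantorDim n) < 1 :=
  (cantorRatio_cantorDim_lt_half n).trans one_half_lt_one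

theorem isProbabilityMeasure_cantorMeasure_cantorDim :
    IsProbabilityMeasure (cantorMeasure (cantorRatio (cantorDim n))) :=
  isProbabilityMeasure_cantorMeasure (cantorRatio_pos _) (cantorRatio_cantorDim_lt_one n)

theorem measurableSet_range_cantorCoding_cantorDim :
    MeasurableSet (range (cantorCoding (cantorRatio (cantorDim n)))) :=
  (isCompact_range_cantorCoding (cantorRatio_pos _) (cantorRatio_cantorDim_lt_one n)).isClosed
    |>.measurableSet

theorem dimH_range_cantorCoding_cantorDim_lt_one :
    dimH (range (cantorCoding (cantorRatio (cantorDim n)))) < 1 :=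
  (dimH_range_cantorCoding_le (cantorRatio_pos _) (cantorRatio_cantorDim_lt_one n)
    (cantorRatio_rpow_self (cantorDim_pos n).ne')).trans_lt
    (ENNReal.ofReal_lt_one.2 (cantorDim_lt_one n))

theorem cantorMeasure_cantorUnion :
    cantorMeasure (cantorRatio (cantorDim n)) cantorUnion = 1 := by
  have := isProbabilityMeasure_cantorMeasure_cantorDim n
  refine le_antisymm prob_le_one ?_
  rw [← cantorMeasure_range (cantorRatio_pos _) (cantorRatio_cantorDim_lt_one n)]
  exact measure_mono (subset_iUnion (fun n => range (cantorCoding (cantorRatio (cantorDim n)))) n)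

end CantorUnion

theorem cantorUnion_subset_Icc : cantorUnion ⊆ Icc 0 1 :=
  iUnion_subset fun n => range_subset_iff.2
    (cantorCoding_mem_Icc (cantorRatio_pos _) (cantorRatio_cantorDim_lt_one n))

theorem measurableSet_cantorUnion : MeasurableSet cantorUnion :=
  .iUnion measurableSet_range_cantorCoding_cantorDim

theorem cantorMixture_apply_of_forall_eq_one {S : Set ℝ} (hS : MeasurableSet S)
    (h : ∀ n, cantorMeasure (cantorRatio (cantorDim n)) S = 1) : cantorMixture S = 1 := by
  rw [cantorMixture, Measure.sum_smul_apply_of_forall_eq_one hS h, ENNReal.tsum_inv_two_pow_succ]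

instance isProbabilityMeasure_cantorMixture : IsProbabilityMeasure cantorMixture :=
  ⟨cantorMixture_apply_of_forall_eq_one .univ fun n =>
    (isProbabilityMeasure_cantorMeasure_cantorDim n).measure_univ⟩

theorem cantorMixture_cantorUnion : cantorMixture cantorUnion = 1 :=
  cantorMixture_apply_of_forall_eq_one measurableSet_cantorUnion cantorMeasure_cantorUnion

theorem one_le_upperDimH_cantorMixture : 1 ≤ upperDimH cantorMixture := by
  have hlim : Tendsto (fun n => ENNReal.ofReal (cantorDim n)) atTop (𝓝 1) := by
    simpa using ENNReal.tendsto_ofReal tendsto_cantorDim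
  calc 1 ≤ ⨆ n, ENNReal.ofReal (cantorDim n) :=
        le_of_tendsto' hlim (le_iSup (fun n => ENNReal.ofReal (cantorDim n)))
    _ ≤ ⨆ n, lowerDimH (cantorMeasure (cantorRatio (cantorDim n))) :=
        iSup_mono fun n => ofReal_le_lowerDimH_cantorMeasure (cantorRatio_pos _)
          (cantorRatio_cantorDim_lt_half n) (cantorDim_pos n)
          (cantorRatio_rpow_self (cantorDim_pos n).ne')
    _ ≤ upperDimH cantorMixture :=
        iSup_lowerDimH_le_upperDimH_sum_smul
          (fun n => (isProbabilityMeasure_cantorMeasure_cantorDim n).ne_zero) fun n => by simp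

/-- There is a Borel set `Z ⊆ [0,1]` of Hausdorff dimension `1` with no measure
of full lower Hausdorff dimension but with a measure of full upper Hausdorff
dimension. -/
theorem stmt14 :
    ∃ Z : Set ℝ, Z ⊆ Set.Icc (0 : ℝ) 1 ∧ MeasurableSet Z ∧ dimH Z = 1 ∧
      (¬ ∃ μ : Measure ℝ, IsProbabilityMeasure μ ∧ μ Z = 1 ∧ lowerDimH μ = dimH Z) ∧
      (∃ μ : Measure ℝ, IsProbabilityMeasure μ ∧ μ Z = 1 ∧ upperDimH μ = dimH Z) := by
  have hupper : upperDimH cantorMixture ≤ dimH cantorUnion :=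
    upperDimH_le_dimH measurableSet_cantorUnion.nullMeasurableSet
      ((prob_compl_eq_zero_iff measurableSet_cantorUnion).2 cantorMixture_cantorUnion)
  have hdim : dimH cantorUnion = 1 :=
    le_antisymm ((dimH_mono (subset_univ _)).trans Real.dimH_univ.le)
      (one_le_upperDimH_cantorMixture.trans hupper)
  refine ⟨cantorUnion, cantorUnion_subset_Icc, measurableSet_cantorUnion, hdim, ?_,
    cantorMixture, isProbabilityMeasure_cantorMixture, cantorMixture_cantorUnion,
    le_antisymm hupper (hdim ▸ one_le_upperDimH_cantorMixture)⟩
  rintro ⟨μ, -, hμZ, hμ⟩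
  refine (lowerDimH_lt_of_measure_iUnion_ne_zero
    (fun n => (measurableSet_range_cantorCoding_cantorDim n).nullMeasurableSet)
    (ne_of_eq_of_ne hμZ one_ne_zero) fun n => ?_).ne (hμ.trans hdim)
  exact hdim ▸ dimH_range_cantorCoding_cantorDim_lt_one n
end
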